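/- arXiv:2009.03517 — 2 statements merged into one kernel-verified Lean document; each statement's English description precedes it below -/
import Mathlib

section
/- Let Q(P) = (1+√(1+P²))/P and define g₂(P) = ((2ρ₁₁ - 1)Q - ρ₂₁ Q² + ρ₁₂)/(1+Q²)². Then as P → 0, g₂(P) = -(1/4) ρ₂₁ P² - (1/8)(1 - 2ρ₁₁) P³ + O(P⁴). -/
open Complex Asymptotics Filter

/-! With `s = √(1 + P²)` and `Q = (1 + s) / P` one has `1 + Q² = 2 s (1 + s) / P²`,
so `g₂` is the rational function
`((2ρ₁₁ - 1)(1 + s) P³ - ρ₂₁ (1 + s)² P² + ρ₁₂ P⁴) / (4 s² (1 + s)²)`,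
whose denominator does not vanish at `P = 0`. Using `s² = 1 + P²`, subtracting the claimed
cubic Taylor polynomial leaves `P⁴` times a rational function of `s` and `P` that is continuous
at `P = 0`. -/

section Algebra

variable {K : Type*} [Field K] {s P : K}

lemma one_add_sq_div_eq (hs : s ^ 2 = 1 + P ^ 2) (hP : P ≠ 0) :
    1 + ((1 + s) / P) ^ 2 = 2 * s * (1 + s) / P ^ 2 := by
  field_simp
  linear_combination -hs

lemma div_one_add_sq_sq_eq [CharZero K] (a b c : K) (hs : s ^ 2 = 1 + P ^ 2) (hP : P ≠ 0)
    (hs₀ : s ≠ 0) (hs₁ : 1 + s ≠ 0) :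
    (a * ((1 + s) / P) - b * ((1 + s) / P) ^ 2 + c) / (1 + ((1 + s) / P) ^ 2) ^ 2 =
      (a * (1 + s) * P ^ 3 - b * (1 + s) ^ 2 * P ^ 2 + c * P ^ 4) / (4 * s ^ 2 * (1 + s) ^ 2) := by
  rw [one_add_sq_div_eq hs hP]
  field_simp
  ring

def taylorRemainder (a b c s P : K) : K :=
  (2 * b * (1 + s) ^ 2 - a * P * ((1 + s) ^ 2 + 1) + 2 * c) / (8 * s ^ 2 * (1 + s) ^ 2)

lemma sub_taylor_eq_pow_four_mul [CharZero K] (a b c : K) (hs : s ^ 2 = 1 + P ^ 2)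
    (hP : P ≠ 0) (hs₀ : s ≠ 0) (hs₁ : 1 + s ≠ 0) :
    (a * ((1 + s) / P) - b * ((1 + s) / P) ^ 2 + c) / (1 + ((1 + s) / P) ^ 2) ^ 2
      - (-(1 / 4) * b * P ^ 2 + (1 / 8) * a * P ^ 3) = P ^ 4 * taylorRemainder a b c s P := by
  rw [div_one_add_sq_sq_eq a b c hs hP hs₀ hs₁, taylorRemainder]
  field_simp
  linear_combination (8 * b * (1 + s) ^ 2 - 4 * a * P * ((1 + s) ^ 2 + 1)) * hs

end Algebra

lemma sub_taylor_eq_pow_four_mul_ofReal (a b c : ℂ) {P : ℝ} (hP : P ≠ 0) :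
    (a * (((1 + √(1 + P ^ 2)) / P : ℝ) : ℂ) - b * (((1 + √(1 + P ^ 2)) / P : ℝ) : ℂ) ^ 2
          + c)
        / (1 + (((1 + √(1 + P ^ 2)) / P : ℝ) : ℂ) ^ 2) ^ 2
      - (-(1 / 4) * b * (P : ℂ) ^ 2 + (1 / 8) * a * (P : ℂ) ^ 3)
      = (P : ℂ) ^ 4 * taylorRemainder a b c (√(1 + P ^ 2) : ℂ) P := by
  have hs : ((√(1 + P ^ 2) : ℝ) : ℂ) ^ 2 = 1 + (P : ℂ) ^ 2 := by
    exact_mod_cast Real.sq_sqrt (by positivity : (0 : ℝ) ≤ 1 + P ^ 2)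
  have hs₀ : ((√(1 + P ^ 2) : ℝ) : ℂ) ≠ 0 := ofReal_ne_zero.2 (by positivity)
  have hs₁ : 1 + ((√(1 + P ^ 2) : ℝ) : ℂ) ≠ 0 := by
    exact_mod_cast (by positivity : 1 + √(1 + P ^ 2) ≠ 0)
  push_cast
  exact sub_taylor_eq_pow_four_mul a b c hs (ofReal_ne_zero.2 hP) hs₀ hs₁

lemma continuousAt_taylorRemainder_zero (a b c : ℂ) :
    ContinuousAt (fun P : ℝ => taylorRemainder a b c (√(1 + P ^ 2) : ℂ) P) 0 := by
  unfold taylorRemainder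
  refine ContinuousAt.div (by fun_prop) (by fun_prop) ?_
  norm_num

/-- Taylor expansion of g₂ at P = 0. -/
theorem stmt_8 (ρ11 : ℝ) (ρ12 ρ21 : ℂ)
    (Q : ℝ → ℝ) (hQ : ∀ P : ℝ, Q P = (1 + Real.sqrt (1 + P ^ 2)) / P)
    (g2 : ℝ → ℂ)
    (hg2 : ∀ P : ℝ, g2 P =
      ((2 * ρ11 - 1) * (Q P : ℂ) - ρ21 * (Q P : ℂ) ^ 2 + ρ12) / (1 + (Q P : ℂ) ^ 2) ^ 2) :
    (fun P : ℝ => g2 P - (-(1 / 4) * ρ21 * (P : ℂ) ^ 2 - (1 / 8) * (1 - 2 * ρ11) * (P : ℂ) ^ 3))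
      =O[nhdsWithin (0 : ℝ) {0}ᶜ] (fun P : ℝ => P ^ 4) := by
  set R := fun P : ℝ => taylorRemainder (2 * ρ11 - 1 : ℂ) ρ21 ρ12 (√(1 + P ^ 2) : ℂ) P
  have hR : R =O[nhdsWithin (0 : ℝ) {0}ᶜ] (fun _ => (1 : ℝ)) :=
    ((continuousAt_taylorRemainder_zero _ _ _).tendsto.mono_left nhdsWithin_le_nhds).isBigO_one ℝ
  refine EventuallyEq.trans_isBigO (f₂ := fun P : ℝ => (P : ℂ) ^ 4 * R P) ?_ ?_
  · filter_upwards [self_mem_nhdsWithin] with P hP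
    rw [hg2, hQ]
    linear_combination sub_taylor_eq_pow_four_mul_ofReal (2 * ρ11 - 1 : ℂ) ρ21 ρ12 hP
  have h4 : (fun P : ℝ => (P : ℂ) ^ 4) =O[nhdsWithin (0 : ℝ) {0}ᶜ] (fun P : ℝ => P ^ 4) :=
    (isBigO_ofReal_left.2 (isBigO_refl _ _)).congr_left fun P => ofReal_pow P 4
  simpa only [mul_one] using h4.mul hR
end

section
/- With h, g₁, g₂ defined as above from Q(P) = (1+√(1+P²))/P, one has for real P → 0: g₁(P) = -4·conj(g₂(P))/P² + O(P²) and g₁(P) = -2 h(P)/P + O(P²), where ρ₂₁ = conj(ρ₁₂) and ρ₁₁ ∈ ℝ. -/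
open Complex Asymptotics Filter Topology

/-! With `P = tan θ` one has `Q(P) = cot (θ / 2)`, so `u = 1 / Q` satisfies the double-angle
relation `P (1 - u²) = 2 u` and `|u| ≤ |P| / 2`. Substituting `Q = 1 / u` and `P = 2 u / (1 - u²)`,
each difference becomes `u²` times a rational function of `u` that is regular at `u = 0`, hence
is `O(u²) = O(P²)`. -/

/-- `tanHalf (tan θ) = tan (θ / 2)` for `|θ| < π / 2`. -/
noncomputable def tanHalf (P : ℝ) : ℝ := P / (1 + √(1 + P ^ 2))

lemma one_add_sqrt_one_add_sq_pos (P : ℝ) : 0 < 1 + √(1 + P ^ 2) := by positivity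

lemma two_le_one_add_sqrt_one_add_sq (P : ℝ) : 2 ≤ 1 + √(1 + P ^ 2) := by
  have : 1 ≤ √(1 + P ^ 2) := Real.one_le_sqrt.mpr (by nlinarith)
  linarith

lemma inv_tanHalf (P : ℝ) : (tanHalf P)⁻¹ = (1 + √(1 + P ^ 2)) / P := inv_div _ _

lemma tanHalf_ne_zero {P : ℝ} (hP : P ≠ 0) : tanHalf P ≠ 0 :=
  div_ne_zero hP (one_add_sqrt_one_add_sq_pos P).ne'

lemma abs_tanHalf_le (P : ℝ) : |tanHalf P| ≤ |P| / 2 := by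
  rw [tanHalf, abs_div, abs_of_pos (one_add_sqrt_one_add_sq_pos P)]
  exact div_le_div_of_nonneg_left (abs_nonneg P) two_pos (two_le_one_add_sqrt_one_add_sq P)

lemma mul_one_sub_tanHalf_sq (P : ℝ) : P * (1 - tanHalf P ^ 2) = 2 * tanHalf P := by
  have hs : √(1 + P ^ 2) ^ 2 = 1 + P ^ 2 := Real.sq_sqrt (by positivity)
  rw [tanHalf]
  field_simp
  linear_combination P * hs

section Identities

variable {K : Type*} [Field K]

/-- `a`, `ρ`, `ρ'` stand for `2ρ₁₁ - 1`, `ρ₁₂`, `ρ₂₁`. -/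
def hFun (a ρ ρ' q : K) : K := q * (a * q + ρ' - ρ * q ^ 2) / (1 + q ^ 2) ^ 2

def g₁Fun (a ρ ρ' q : K) : K := -q ^ 2 * (a * q - ρ' - ρ * q ^ 2) / (1 + q ^ 2) ^ 2

def g₂Fun (a ρ ρ' q : K) : K := (a * q - ρ' * q ^ 2 + ρ) / (1 + q ^ 2) ^ 2

def rem₁ (a ρ ρ' u : K) : K :=
  ((u ^ 2 - 2) * (a * u - ρ) + (2 - 2 * u ^ 2 + u ^ 4) * ρ') / (1 + u ^ 2) ^ 2

def rem₂ (a ρ ρ' u : K) : K := (ρ - a * u + (2 - u ^ 2) * ρ') / (1 + u ^ 2) ^ 2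

lemma one_add_inv_sq {u : K} (hu : u ≠ 0) : 1 + u⁻¹ ^ 2 = (1 + u ^ 2) / u ^ 2 := by
  field_simp
  ring

variable [CharZero K] {p u : K} (a ρ ρ' : K)

lemma eq_two_mul_div_one_sub_sq (hu : u ≠ 0) (hpu : p * (1 - u ^ 2) = 2 * u) :
    p = 2 * u / (1 - u ^ 2) := by
  have h : 1 - u ^ 2 ≠ 0 := fun h => hu (by simpa [h] using hpu.symm)
  rw [← hpu]
  field_simp

lemma g₁Fun_sub_g₂Fun (hu : u ≠ 0) (hpu : p * (1 - u ^ 2) = 2 * u) :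
    g₁Fun a ρ ρ' u⁻¹ - (-4 * g₂Fun a ρ' ρ u⁻¹ / p ^ 2) = u ^ 2 * rem₁ a ρ ρ' u := by
  rw [eq_two_mul_div_one_sub_sq hu hpu]
  unfold g₁Fun g₂Fun rem₁
  rw [one_add_inv_sq hu]
  field_simp
  ring

lemma g₁Fun_sub_hFun (hu : u ≠ 0) (hpu : p * (1 - u ^ 2) = 2 * u) :
    g₁Fun a ρ ρ' u⁻¹ - (-2 * hFun a ρ ρ' u⁻¹ / p) = u ^ 2 * rem₂ a ρ ρ' u := by
  rw [eq_two_mul_div_one_sub_sq hu hpu]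
  unfold g₁Fun hFun rem₂
  rw [one_add_inv_sq hu]
  field_simp
  ring

end Identities

lemma continuousAt_rem₁ (a ρ ρ' : ℂ) : ContinuousAt (rem₁ a ρ ρ') 0 := by
  unfold rem₁; fun_prop (disch := norm_num)

lemma continuousAt_rem₂ (a ρ ρ' : ℂ) : ContinuousAt (rem₂ a ρ ρ') 0 := by
  unfold rem₂; fun_prop (disch := norm_num)

lemma isBigO_sq_of_eq_tanHalf_sq_mul {f : ℝ → ℂ} {F : ℂ → ℂ} (hF : ContinuousAt F 0)
    (hf : ∀ P ≠ 0, f P = (tanHalf P : ℂ) ^ 2 * F (tanHalf P)) :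
    f =O[𝓝[≠] 0] fun P => P ^ 2 := by
  have hu : (fun P => (tanHalf P : ℂ)) =O[𝓝 0] fun P => P :=
    IsBigO.of_bound (1 / 2) (Eventually.of_forall fun P => by
      simpa [div_eq_inv_mul] using abs_tanHalf_le P)
  have hFu : Tendsto (fun P => F (tanHalf P)) (𝓝 0) (𝓝 (F 0)) :=
    hF.tendsto.comp (hu.trans_tendsto tendsto_id)
  have hprod : (fun P => (tanHalf P : ℂ) ^ 2 * F (tanHalf P)) =O[𝓝 0] fun P => P ^ 2 := by
    simpa only [mul_one] using (hu.pow 2).mul (hFu.isBigO_one ℝ)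
  have hf' : (fun P => (tanHalf P : ℂ) ^ 2 * F (tanHalf P)) =ᶠ[𝓝[≠] 0] f :=
    eventually_nhdsWithin_of_forall fun P hP => (hf P hP).symm
  exact (hprod.mono nhdsWithin_le_nhds).congr' hf' EventuallyEq.rfl

theorem stmt_9_general (ρ11 : ℝ) (ρ12 ρ21 : ℂ)
    (hconj : ρ21 = (starRingEnd ℂ) ρ12)
    (Q : ℝ → ℝ) (hQ : ∀ P : ℝ, Q P = (1 + Real.sqrt (1 + P ^ 2)) / P)
    (h g1 g2 : ℝ → ℂ)
    (hh : ∀ P : ℝ, h P = (Q P : ℂ) *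
      ((2 * ρ11 - 1) * (Q P : ℂ) + ρ21 - ρ12 * (Q P : ℂ) ^ 2) / (1 + (Q P : ℂ) ^ 2) ^ 2)
    (hg1 : ∀ P : ℝ, g1 P = -(Q P : ℂ) ^ 2 *
      ((2 * ρ11 - 1) * (Q P : ℂ) - ρ21 - ρ12 * (Q P : ℂ) ^ 2) / (1 + (Q P : ℂ) ^ 2) ^ 2)
    (hg2 : ∀ P : ℝ, g2 P =
      ((2 * ρ11 - 1) * (Q P : ℂ) - ρ21 * (Q P : ℂ) ^ 2 + ρ12) / (1 + (Q P : ℂ) ^ 2) ^ 2) :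
    ((fun P : ℝ => g1 P - (-4 * (starRingEnd ℂ) (g2 P) / (P : ℂ) ^ 2))
      =O[nhdsWithin (0 : ℝ) {0}ᶜ] (fun P : ℝ => P ^ 2)) ∧
    ((fun P : ℝ => g1 P - (-2 * h P / (P : ℂ)))
      =O[nhdsWithin (0 : ℝ) {0}ᶜ] (fun P : ℝ => P ^ 2)) := by
  set a : ℂ := 2 * ρ11 - 1
  have hQ' (P : ℝ) : (Q P : ℂ) = (tanHalf P : ℂ)⁻¹ := by rw [hQ, ← inv_tanHalf, ofReal_inv]
  have hconj_g2 (P : ℝ) : (starRingEnd ℂ) (g2 P) = g₂Fun a ρ21 ρ12 (Q P) := by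
    simp [hg2, g₂Fun, a, hconj, map_ofNat]
  have hu (P : ℝ) (hP : P ≠ 0) : (tanHalf P : ℂ) ≠ 0 := ofReal_ne_zero.mpr (tanHalf_ne_zero hP)
  have hPu (P : ℝ) : (P : ℂ) * (1 - (tanHalf P : ℂ) ^ 2) = 2 * tanHalf P := by
    exact_mod_cast mul_one_sub_tanHalf_sq P
  constructor
  · refine isBigO_sq_of_eq_tanHalf_sq_mul (continuousAt_rem₁ a ρ12 ρ21) fun P hP => ?_
    rw [hg1, hconj_g2, hQ']
    exact g₁Fun_sub_g₂Fun a ρ12 ρ21 (hu P hP) (hPu P)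
  · refine isBigO_sq_of_eq_tanHalf_sq_mul (continuousAt_rem₂ a ρ12 ρ21) fun P hP => ?_
    rw [hg1, hh, hQ']
    exact g₁Fun_sub_hFun a ρ12 ρ21 (hu P hP) (hPu P)

/-- relations between g₁, g₂ and h as P → 0, with ρ₂₁ = conj ρ₁₂. -/
theorem stmt_9 (ρ11 : ℝ) (hρ11 : 0 ≤ ρ11 ∧ ρ11 ≤ 1) (ρ12 ρ21 : ℂ)
    (hconj : ρ21 = (starRingEnd ℂ) ρ12)
    (Q : ℝ → ℝ) (hQ : ∀ P : ℝ, Q P = (1 + Real.sqrt (1 + P ^ 2)) / P)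
    (h g1 g2 : ℝ → ℂ)
    (hh : ∀ P : ℝ, h P = (Q P : ℂ) *
      ((2 * ρ11 - 1) * (Q P : ℂ) + ρ21 - ρ12 * (Q P : ℂ) ^ 2) / (1 + (Q P : ℂ) ^ 2) ^ 2)
    (hg1 : ∀ P : ℝ, g1 P = -(Q P : ℂ) ^ 2 *
      ((2 * ρ11 - 1) * (Q P : ℂ) - ρ21 - ρ12 * (Q P : ℂ) ^ 2) / (1 + (Q P : ℂ) ^ 2) ^ 2)
    (hg2 : ∀ P : ℝ, g2 P =
      ((2 * ρ11 - 1) * (Q P : ℂ) - ρ21 * (Q P : ℂ) ^ 2 + ρ12) / (1 + (Q P : ℂ) ^ 2) ^ 2) :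
    ((fun P : ℝ => g1 P - (-4 * (starRingEnd ℂ) (g2 P) / (P : ℂ) ^ 2))
      =O[nhdsWithin (0 : ℝ) {0}ᶜ] (fun P : ℝ => P ^ 2)) ∧
    ((fun P : ℝ => g1 P - (-2 * h P / (P : ℂ)))
      =O[nhdsWithin (0 : ℝ) {0}ᶜ] (fun P : ℝ => P ^ 2)) :=
  stmt_9_general ρ11 ρ12 ρ21 hconj Q hQ h g1 g2 hh hg1 hg2
end
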